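/- arXiv:0711.3959 — 5 statements merged into one kernel-verified Lean document; each statement's English description precedes it below -/
import Mathlib

section
/- Let G be a chordal P5-free graph that admits a b-coloring with k > ω(G) colors. Then G contains an induced 2K2 (four vertices a,b,c,d with exactly the edges ab and cd). -/
open SimpleGraph

/-- A b-coloring of `G` with `k` colors: a proper coloring using all `k` colors in which
every color class contains a b-vertex, i.e. a vertex with a neighbour of every other color. -/
def IsBColoring {V : Type*} (G : SimpleGraph V) {k : ℕ} (c : V → Fin k) : Prop :=
  (∀ ⦃u v : V⦄, G.Adj u v → c u ≠ c v) ∧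
  ∀ i : Fin k, ∃ u : V, c u = i ∧ ∀ j : Fin k, j ≠ i → ∃ v : V, G.Adj u v ∧ c v = j

/-- The b-chromatic number: the largest `k` such that `G` admits a b-coloring with `k` colors. -/
noncomputable def bChromaticNumber {V : Type*} (G : SimpleGraph V) : ℕ :=
  sSup {k : ℕ | ∃ c : V → Fin k, IsBColoring G c}

/-- `G` contains an induced copy of `H`. -/
def HasInducedCopy {V : Type*} {W : Type*} (G : SimpleGraph V) (H : SimpleGraph W) : Prop :=
  ∃ f : W → V, Function.Injective f ∧ ∀ a b : W, G.Adj (f a) (f b) ↔ H.Adj a b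

/-- `G` contains an induced (chordless) cycle on `n` vertices. -/
def HasInducedCycle {V : Type*} (G : SimpleGraph V) (n : ℕ) : Prop :=
  ∃ f : ZMod n → V, Function.Injective f ∧
    ∀ i j : ZMod n, G.Adj (f i) (f j) ↔ (j = i + 1 ∨ i = j + 1)

/-- A graph is chordal iff it has no induced cycle of length at least 4. -/
def IsChordalGraph {V : Type*} (G : SimpleGraph V) : Prop :=
  ∀ n : ℕ, 4 ≤ n → ¬ HasInducedCycle G n

/-- The graph on `Fin n` with the given edge list. -/
def graphOfList (n : ℕ) (E : List (Fin n × Fin n)) : SimpleGraph (Fin n) :=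
  SimpleGraph.fromRel (fun a b => (a, b) ∈ E)
/-- The graph 2K₂: two disjoint edges. -/
def twoK2 : SimpleGraph (Fin 4) := graphOfList 4 [(0, 1), (2, 3)]

lemma aux_no2K2 {V : Type*} {G : SimpleGraph V} (h : ¬ HasInducedCopy G twoK2)
    {x1 x2 y1 y2 : V}
    (hne13 : x1 ≠ y1) (hne14 : x1 ≠ y2) (hne23 : x2 ≠ y1) (hne24 : x2 ≠ y2)
    (e1 : G.Adj x1 x2) (e2 : G.Adj y1 y2)
    (n1 : ¬ G.Adj x1 y1) (n2 : ¬ G.Adj x1 y2) (n3 : ¬ G.Adj x2 y1) (n4 : ¬ G.Adj x2 y2) :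
    False := by
  have hne12 : x1 ≠ x2 := e1.ne
  have hne34 : y1 ≠ y2 := e2.ne
  have n1' : ¬ G.Adj y1 x1 := fun hh => n1 hh.symm
  have n2' : ¬ G.Adj y2 x1 := fun hh => n2 hh.symm
  have n3' : ¬ G.Adj y1 x2 := fun hh => n3 hh.symm
  have n4' : ¬ G.Adj y2 x2 := fun hh => n4 hh.symm
  apply h
  refine ⟨![x1, x2, y1, y2], ?_, ?_⟩
  · intro a b hab
    fin_cases a <;> fin_cases b <;> simp_all
  · intro a b
    fin_cases a <;> fin_cases b <;>
      simp_all [twoK2, graphOfList, SimpleGraph.fromRel_adj, e1.symm, e2.symm]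

set_option maxRecDepth 20000 in
lemma aux_noC4 {V : Type*} {G : SimpleGraph V} (h : ¬ HasInducedCycle G 4)
    {x0 x1 x2 x3 : V}
    (e01 : G.Adj x0 x1) (e12 : G.Adj x1 x2) (e23 : G.Adj x2 x3) (e30 : G.Adj x3 x0)
    (n02 : ¬ G.Adj x0 x2) (n13 : ¬ G.Adj x1 x3)
    (d02 : x0 ≠ x2) (d13 : x1 ≠ x3) : False := by
  have d01 : x0 ≠ x1 := e01.ne
  have d12 : x1 ≠ x2 := e12.ne
  have d23 : x2 ≠ x3 := e23.ne
  have d03 : x0 ≠ x3 := fun hh => e30.ne hh.symm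
  have n02' : ¬ G.Adj x2 x0 := fun hh => n02 hh.symm
  have n13' : ¬ G.Adj x3 x1 := fun hh => n13 hh.symm
  apply h
  refine ⟨fun i => if i = 0 then x0 else if i = 1 then x1 else if i = 2 then x2 else x3, ?_, ?_⟩
  · have hz : ∀ i : ZMod 4, i = 0 ∨ i = 1 ∨ i = 2 ∨ i = 3 := by decide
    intro a b hab
    rcases hz a with rfl|rfl|rfl|rfl <;> rcases hz b with rfl|rfl|rfl|rfl <;>
      simp_all (config := { decide := true })
  · have hz : ∀ i : ZMod 4, i = 0 ∨ i = 1 ∨ i = 2 ∨ i = 3 := by decide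
    intro i j
    rcases hz i with rfl|rfl|rfl|rfl <;> rcases hz j with rfl|rfl|rfl|rfl <;>
      simp_all (config := { decide := true })
        [e01.symm, e12.symm, e23.symm, e30, e30.symm, G.irrefl]

set_option maxRecDepth 20000 in
lemma aux_noC5 {V : Type*} {G : SimpleGraph V} (h : ¬ HasInducedCycle G 5)
    {x0 x1 x2 x3 x4 : V}
    (e01 : G.Adj x0 x1) (e12 : G.Adj x1 x2) (e23 : G.Adj x2 x3) (e34 : G.Adj x3 x4)
    (e40 : G.Adj x4 x0)
    (n02 : ¬ G.Adj x0 x2) (n03 : ¬ G.Adj x0 x3) (n13 : ¬ G.Adj x1 x3) (n14 : ¬ G.Adj x1 x4)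
    (n24 : ¬ G.Adj x2 x4)
    (d02 : x0 ≠ x2) (d03 : x0 ≠ x3) (d13 : x1 ≠ x3) (d14 : x1 ≠ x4) (d24 : x2 ≠ x4) : False := by
  have d01 : x0 ≠ x1 := e01.ne
  have d12 : x1 ≠ x2 := e12.ne
  have d23 : x2 ≠ x3 := e23.ne
  have d34 : x3 ≠ x4 := e34.ne
  have d04 : x0 ≠ x4 := fun hh => e40.ne hh.symm
  have n02' : ¬ G.Adj x2 x0 := fun hh => n02 hh.symm
  have n03' : ¬ G.Adj x3 x0 := fun hh => n03 hh.symm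
  have n13' : ¬ G.Adj x3 x1 := fun hh => n13 hh.symm
  have n14' : ¬ G.Adj x4 x1 := fun hh => n14 hh.symm
  have n24' : ¬ G.Adj x4 x2 := fun hh => n24 hh.symm
  apply h
  refine ⟨fun i => if i = 0 then x0 else if i = 1 then x1 else if i = 2 then x2
      else if i = 3 then x3 else x4, ?_, ?_⟩
  · have hz : ∀ i : ZMod 5, i = 0 ∨ i = 1 ∨ i = 2 ∨ i = 3 ∨ i = 4 := by decide
    intro a b hab
    rcases hz a with rfl|rfl|rfl|rfl|rfl <;> rcases hz b with rfl|rfl|rfl|rfl|rfl <;>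
      simp_all (config := { decide := true })
  · have hz : ∀ i : ZMod 5, i = 0 ∨ i = 1 ∨ i = 2 ∨ i = 3 ∨ i = 4 := by decide
    intro i j
    rcases hz i with rfl|rfl|rfl|rfl|rfl <;> rcases hz j with rfl|rfl|rfl|rfl|rfl <;>
      simp_all (config := { decide := true })
        [e01.symm, e12.symm, e23.symm, e34.symm, e40, e40.symm, G.irrefl]


/-- A chordal P₅-free graph with a b-coloring using more than ω(G) colors
contains an induced 2K₂. -/
theorem twoK2_of_bColoring_gt_cliqueNum {V : Type*} [Fintype V] (G : SimpleGraph V)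
    (hchordal : IsChordalGraph G) (hP5 : ¬ HasInducedCopy G (pathGraph 5))
    {k : ℕ} (c : V → Fin k) (hc : IsBColoring G c) (hk : G.cliqueNum < k) :
    HasInducedCopy G twoK2 := by
  classical
  by_contra h2
  obtain ⟨hproper, hb⟩ := hc
  have nsame : ∀ {x y : V}, c x = c y → ¬ G.Adj x y := fun hxy hadj => hproper hadj hxy
  have noC4 : ¬ HasInducedCycle G 4 := hchordal 4 (by norm_num)
  have noC5 : ¬ HasInducedCycle G 5 := hchordal 5 (by norm_num)
  choose U hU1 hU2 using hb
  -- a clique realizing all k colors is impossible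
  have bigclique : ∀ g : Fin k → V, (∀ j, c (g j) = j) →
      (∀ i j : Fin k, i ≠ j → G.Adj (g i) (g j)) → False := by
    intro g hcg hadj
    have hinj : Function.Injective g := fun i j hij => by rw [← hcg i, ← hcg j, hij]
    have hcl : G.IsClique (↑(Finset.univ.image g) : Set V) := by
      rintro x hx y hy hxy
      simp only [Finset.coe_image, Finset.coe_univ, Set.image_univ, Set.mem_range] at hx hy
      obtain ⟨i, rfl⟩ := hx
      obtain ⟨j, rfl⟩ := hy
      exact hadj i j (fun hh => hxy (congrArg g hh))
    have hcard : (Finset.univ.image g).card = k := by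
      rw [Finset.card_image_of_injective _ hinj, Finset.card_univ, Fintype.card_fin]
    have hle := SimpleGraph.IsClique.card_le_cliqueNum (tc := hcl)
    omega
  -- find two nonadjacent b-vertices
  have hex : ∃ a b : Fin k, a ≠ b ∧ ¬ G.Adj (U a) (U b) := by
    by_contra hall
    push_neg at hall
    exact bigclique U hU1 (fun i j hij => hall i j hij)
  obtain ⟨a, b, hab, hnadj⟩ := hex
  set u := U a with hu
  set w := U b with hw
  have hcu : c u = a := hU1 a
  have hcw : c w = b := hU1 b
  obtain ⟨u', hadj_uu', hcu'⟩ := hU2 a b hab.symm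
  obtain ⟨w', hadj_ww', hcw'⟩ := hU2 b a hab
  have nuw' : ¬ G.Adj u w' := nsame (by rw [hcu, hcw'])
  have nu'w : ¬ G.Adj u' w := nsame (by rw [hcu', hcw])
  have duw' : u ≠ w' := fun hh => hnadj (hh ▸ hadj_ww').symm
  have du'w : u' ≠ w := fun hh => hnadj (hh ▸ hadj_uu')
  have duw : u ≠ w := fun hh => hab (by rw [← hcu, ← hcw, hh])
  have du'w' : u' ≠ w' := fun hh => hab.symm (by rw [← hcu', ← hcw', hh])
  -- u' and w' must be adjacent, else 2K2 on u u' ; w' w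
  have huw' : G.Adj u' w' := by
    by_contra hno
    exact aux_no2K2 h2 duw' duw du'w' du'w hadj_uu' (hadj_ww'.symm)
      nuw' hnadj (fun hh => hno hh) nu'w
  -- rainbow common neighbours of u and w
  have hZex : ∀ j : Fin k, ∃ z : V, j ≠ a → j ≠ b →
      c z = j ∧ G.Adj u z ∧ G.Adj w z := by
    intro j
    by_cases hja : j = a
    · exact ⟨u, fun hh => absurd hja hh⟩
    by_cases hjb : j = b
    · exact ⟨u, fun _ hh => absurd hjb hh⟩
    obtain ⟨x, hux, hcx⟩ := hU2 a j hja
    obtain ⟨y, hwy, hcy⟩ := hU2 b j hjb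
    by_cases huy : G.Adj u y
    · exact ⟨y, fun _ _ => ⟨hcy, huy, hwy⟩⟩
    by_cases hwx : G.Adj w x
    · exact ⟨x, fun _ _ => ⟨hcx, hux, hwx⟩⟩
    exfalso
    by_cases hxy : x = y
    · exact huy (hxy ▸ hux)
    · have dxw : x ≠ w := fun hh => hjb (by rw [← hcx, hh, hcw])
      have duy : u ≠ y := fun hh => hja (by rw [← hcy, ← hh, hcu])
      exact aux_no2K2 h2 duw duy dxw hxy hux hwy hnadj huy
        (fun hh => hwx hh.symm) (nsame (by rw [hcx, hcy]))
  choose z hz using hZex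
  have hZadj : ∀ i j : Fin k, i ≠ a → i ≠ b → j ≠ a → j ≠ b → i ≠ j →
      G.Adj (z i) (z j) := by
    intro i j hia hib hja hjb hij
    by_contra hno
    obtain ⟨hci, hui, hwi⟩ := hz i hia hib
    obtain ⟨hcj, huj, hwj⟩ := hz j hja hjb
    have dij : z i ≠ z j := fun hh => hij (by rw [← hci, hh, hcj])
    exact aux_noC4 noC4 hui hwi.symm hwj huj.symm hnadj hno duw dij
  -- u' misses some z j, else clique of size k
  have hj1ex : ∃ j : Fin k, j ≠ a ∧ j ≠ b ∧ ¬ G.Adj u' (z j) := by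
    by_contra hno
    push_neg at hno
    apply bigclique (fun j => if j = a then u else if j = b then u' else z j)
    · intro j
      by_cases hja : j = a
      · rw [if_pos hja, hcu, hja]
      · rw [if_neg hja]
        by_cases hjb : j = b
        · rw [if_pos hjb, hcu', hjb]
        · rw [if_neg hjb]; exact (hz j hja hjb).1
    · intro i j hij
      beta_reduce
      by_cases hia : i = a
      · rw [if_pos hia]
        by_cases hja : j = a
        · exact absurd (hja.trans hia.symm) hij.symm
        · rw [if_neg hja]
          by_cases hjb : j = b
          · rw [if_pos hjb]; exact hadj_uu'
          · rw [if_neg hjb]; exact (hz j hja hjb).2.1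
      · rw [if_neg hia]
        by_cases hib : i = b
        · rw [if_pos hib]
          by_cases hja : j = a
          · rw [if_pos hja]; exact hadj_uu'.symm
          · rw [if_neg hja]
            by_cases hjb : j = b
            · exact absurd (hjb.trans hib.symm) hij.symm
            · rw [if_neg hjb]; exact hno j hja hjb
        · rw [if_neg hib]
          by_cases hja : j = a
          · rw [if_pos hja]; exact ((hz i hia hib).2.1).symm
          · rw [if_neg hja]
            by_cases hjb : j = b
            · rw [if_pos hjb]; exact (hno i hia hib).symm
            · rw [if_neg hjb]; exact hZadj i j hia hib hja hjb hij
  -- w' misses some z j, else clique of size k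
  have hj2ex : ∃ j : Fin k, j ≠ a ∧ j ≠ b ∧ ¬ G.Adj w' (z j) := by
    by_contra hno
    push_neg at hno
    apply bigclique (fun j => if j = b then w else if j = a then w' else z j)
    · intro j
      by_cases hjb : j = b
      · rw [if_pos hjb, hcw, hjb]
      · rw [if_neg hjb]
        by_cases hja : j = a
        · rw [if_pos hja, hcw', hja]
        · rw [if_neg hja]; exact (hz j hja hjb).1
    · intro i j hij
      beta_reduce
      by_cases hib : i = b
      · rw [if_pos hib]
        by_cases hjb : j = b
        · exact absurd (hjb.trans hib.symm) hij.symm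
        · rw [if_neg hjb]
          by_cases hja : j = a
          · rw [if_pos hja]; exact hadj_ww'
          · rw [if_neg hja]; exact (hz j hja hjb).2.2
      · rw [if_neg hib]
        by_cases hia : i = a
        · rw [if_pos hia]
          by_cases hjb : j = b
          · rw [if_pos hjb]; exact hadj_ww'.symm
          · rw [if_neg hjb]
            by_cases hja : j = a
            · exact absurd (hja.trans hia.symm) hij.symm
            · rw [if_neg hja]; exact hno j hja hjb
        · rw [if_neg hia]
          by_cases hjb : j = b
          · rw [if_pos hjb]; exact ((hz i hia hib).2.2).symm
          · rw [if_neg hjb]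
            by_cases hja : j = a
            · rw [if_pos hja]; exact (hno i hia hib).symm
            · rw [if_neg hja]; exact hZadj i j hia hib hja hjb hij
  obtain ⟨j₁, hj1a, hj1b, hnu'⟩ := hj1ex
  obtain ⟨j₂, hj2a, hj2b, hnw'⟩ := hj2ex
  -- whenever u' misses z j, w' hits it (else induced C5), and vice versa
  have hC5 : ∀ j : Fin k, j ≠ a → j ≠ b → ¬ G.Adj u' (z j) → G.Adj w' (z j) := by
    intro j hja hjb hnu
    by_contra hnw
    obtain ⟨hcz, huz, hwz⟩ := hz j hja hjb
    have d14 : u' ≠ z j := fun hh => hjb (by rw [← hcz, ← hh, hcu'])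
    have d24 : w' ≠ z j := fun hh => hja (by rw [← hcz, ← hh, hcw'])
    exact aux_noC5 noC5 hadj_uu' huw' hadj_ww'.symm hwz huz.symm
      nuw' hnadj nu'w hnu hnw duw' duw du'w d14 d24
  have hC5' : ∀ j : Fin k, j ≠ a → j ≠ b → ¬ G.Adj w' (z j) → G.Adj u' (z j) := by
    intro j hja hjb hnw
    by_contra hnu
    exact hnw (hC5 j hja hjb hnu)
  have hw'z1 : G.Adj w' (z j₁) := hC5 j₁ hj1a hj1b hnu'
  have hu'z2 : G.Adj u' (z j₂) := hC5' j₂ hj2a hj2b hnw'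
  have hj12 : j₁ ≠ j₂ := by
    intro hh
    exact hnw' (hh ▸ hw'z1)
  have hz12 : G.Adj (z j₁) (z j₂) := hZadj j₁ j₂ hj1a hj1b hj2a hj2b hj12
  have d02 : u' ≠ z j₁ := fun hh => hj1b (by rw [← (hz j₁ hj1a hj1b).1, ← hh, hcu'])
  have d13 : w' ≠ z j₂ := fun hh => hj2a (by rw [← (hz j₂ hj2a hj2b).1, ← hh, hcw'])
  exact aux_noC4 noC4 huw' hw'z1 hz12 hu'z2.symm hnu' hnw' d02 d13
end

section
/- Let G be a chordal graph and let S ⊆ V(G) be a set inducing a subgraph with at least two connected components each of size at least 2, chosen maximal (by inclusion) with this property. Then every vertex of V(G) \ S has a neighbour in every component of G[S] of size at least 2. -/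
open SimpleGraph

/-- `G[S]` has at least two connected components with at least two vertices each. -/
def HasTwoBigComponents {V : Type*} (G : SimpleGraph V) (S : Set V) : Prop :=
  ∃ C₁ C₂ : (G.induce S).ConnectedComponent,
    C₁ ≠ C₂ ∧ C₁.supp.Nontrivial ∧ C₂.supp.Nontrivial

/-- If `S` is maximal inducing at least two big components in a chordal graph, then every
vertex outside `S` has a neighbour in every big component of `G[S]`. -/
theorem neighbour_in_every_big_component {V : Type*} [Fintype V] (G : SimpleGraph V)
    (hchordal : IsChordalGraph G) (S : Set V) (hS : HasTwoBigComponents G S)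
    (hmax : ∀ S' : Set V, S ⊆ S' → HasTwoBigComponents G S' → S' = S)
    (x : V) (hx : x ∉ S)
    (C : (G.induce S).ConnectedComponent) (hC : C.supp.Nontrivial) :
    ∃ y ∈ C.supp, G.Adj x (↑y) := by

  by_contra hcon
  push_neg at hcon
  -- hcon : ∀ y ∈ C.supp, ¬ G.Adj x ↑y
  set S' : Set V := insert x S with hS'
  have hsub : S ⊆ S' := Set.subset_insert _ _
  let f : G.induce S →g G.induce S' :=
    ⟨fun v => ⟨v.1, hsub v.2⟩, fun {a b} h => h⟩
  -- any walk in G[S'] starting in C stays in C (never visits x)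
  have key : ∀ (a b : ↥S') (_ : (G.induce S').Walk a b)
      (_ : ∃ ha : (a : V) ∈ S, (G.induce S).connectedComponentMk ⟨a, ha⟩ = C),
      ∃ hb : (b : V) ∈ S, (G.induce S).connectedComponentMk ⟨b, hb⟩ = C := by
    intro a b w
    induction w with
    | nil => exact id
    | @cons u v' b' h' p ih =>
      rintro ⟨ha, hac⟩
      have hadj : G.Adj (↑u) (↑v') := h'
      have hv'S : (v' : V) ∈ S := by
        rcases v'.2 with hvx | hvS
        · exfalso
          have hmem : (⟨↑u, ha⟩ : ↥S) ∈ C.supp := hac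
          exact hcon ⟨↑u, ha⟩ hmem (hvx ▸ hadj.symm)
        · exact hvS
      refine ih ⟨hv'S, ?_⟩
      have hadj2 : (G.induce S).Adj ⟨↑u, ha⟩ ⟨↑v', hv'S⟩ := hadj
      rw [← hac]
      exact (SimpleGraph.ConnectedComponent.connectedComponentMk_eq_of_adj hadj2.symm)
  -- pick a big component C' distinct from C
  obtain ⟨C₁, C₂, hne, h1, h2⟩ := hS
  obtain ⟨C', hC'ne, hC'⟩ : ∃ C' : (G.induce S).ConnectedComponent,
      C' ≠ C ∧ C'.supp.Nontrivial := by
    by_cases h : C₁ = C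
    · exact ⟨C₂, by rw [← h]; exact hne.symm, h2⟩
    · exact ⟨C₁, h, h1⟩
  obtain ⟨a, hamem, b, hbmem, hab⟩ := hC
  obtain ⟨a', ha'mem, b', hb'mem, hab'⟩ := hC'
  have hamem' : (G.induce S).connectedComponentMk a = C := hamem
  have hbmem' : (G.induce S).connectedComponentMk b = C := hbmem
  have ha'mem' : (G.induce S).connectedComponentMk a' = C' := ha'mem
  have hb'mem' : (G.induce S).connectedComponentMk b' = C' := hb'mem
  -- two big components in G[S']
  have htwo : HasTwoBigComponents G S' := by
    refine ⟨(G.induce S').connectedComponentMk (f a),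
      (G.induce S').connectedComponentMk (f a'), ?_, ?_, ?_⟩
    · intro heq
      have hr : (G.induce S').Reachable (f a) (f a') :=
        (SimpleGraph.ConnectedComponent.eq).mp heq
      obtain ⟨w⟩ := hr
      obtain ⟨hb2, hc2⟩ := key (f a) (f a') w ⟨a.2, by
        have : (⟨(↑(f a) : V), a.2⟩ : ↥S) = a := Subtype.ext rfl
        rw [this]; exact hamem'⟩
      have : (⟨(↑(f a') : V), hb2⟩ : ↥S) = a' := Subtype.ext rfl
      rw [this] at hc2
      exact hC'ne (ha'mem' ▸ hc2.symm ▸ rfl)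
    · refine ⟨f a, rfl, f b, ?_, ?_⟩
      · have hr : (G.induce S).Reachable b a :=
          (SimpleGraph.ConnectedComponent.eq).mp (hbmem'.trans hamem'.symm)
        have : (G.induce S').Reachable (f b) (f a) := hr.map f
        exact (SimpleGraph.ConnectedComponent.eq).mpr this
      · intro h; have h2 := congrArg Subtype.val h; exact hab (Subtype.ext h2)
    · refine ⟨f a', rfl, f b', ?_, ?_⟩
      · have hr : (G.induce S).Reachable b' a' :=
          (SimpleGraph.ConnectedComponent.eq).mp (hb'mem'.trans ha'mem'.symm)
        have : (G.induce S').Reachable (f b') (f a') := hr.map f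
        exact (SimpleGraph.ConnectedComponent.eq).mpr this
      · intro h; have h2 := congrArg Subtype.val h; exact hab' (Subtype.ext h2)
  have := hmax S' hsub htwo
  apply hx
  rw [← this]
  exact Set.mem_insert x S
end

section
/- Let G be a chordal graph and let S ⊆ V(G) induce a subgraph with at least two components of size ≥ 2, with S maximal (by inclusion) with this property. Then V(G) \ S is a clique. -/
/-
Let `u, v ∉ S` be distinct and non-adjacent, and let `C₁, C₂` be two big components of `G[S]`.
If `u` had no neighbour in `C₁`, then `C₁` would stay a component of `G[S ∪ {u}]` while `C₂` grows
into a different big component, contradicting maximality; so `u` and `v` both have neighbours in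
`C₁` and in `C₂`. A shortest `u`–`v` path in `G[C₁ ∪ {u, v}]` is induced, has length at least 2 and
its interior lies in `C₁`; likewise for `C₂`. As `C₁` and `C₂` are disjoint and no edge joins them,
the two paths close up into an induced cycle of length at least 4.
-/

open SimpleGraph

namespace SimpleGraph.Walk

variable {V W : Type*} {G : SimpleGraph V} {H : SimpleGraph W} {u v : V}

structure IsInducedPath (p : G.Walk u v) : Prop where
  isPath : p.IsPath
  not_adj_getVert : ∀ ⦃i j : ℕ⦄, i + 1 < j → j ≤ p.length → ¬ G.Adj (p.getVert i) (p.getVert j)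

theorem isInducedPath_of_length_eq_dist (p : G.Walk u v) (hp : p.length = G.dist u v) :
    p.IsInducedPath := by
  refine ⟨p.isPath_of_length_eq_dist hp, fun i j hij hj hadj => ?_⟩
  have := G.dist_le ((p.take i).append (cons hadj (p.drop j)))
  simp only [length_append, take_length, length_cons, drop_length] at this
  omega

theorem IsInducedPath.map {p : G.Walk u v} (hp : p.IsInducedPath) (f : G ↪g H) :
    (p.map f.toHom).IsInducedPath := by
  refine ⟨hp.isPath.map f.injective, fun i j hij hj => ?_⟩
  rw [length_map] at hj
  simpa [getVert_map] using hp.not_adj_getVert hij hj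

theorem exists_isInducedPath_support_subset (p : G.Walk u v) :
    ∃ q : G.Walk u v, q.IsInducedPath ∧ q.support ⊆ p.support := by
  obtain ⟨q, hq⟩ := p.connected_induce_support.exists_walk_length_eq_dist
    ⟨u, p.start_mem_support⟩ ⟨v, p.end_mem_support⟩
  have hsupp : (q.map (Embedding.induce _).toHom).support ⊆ p.support := by
    rw [support_map]
    rintro _ hz
    obtain ⟨z, -, rfl⟩ := List.mem_map.mp hz
    exact z.2
  exact ⟨_, (isInducedPath_of_length_eq_dist q hq).map _, hsupp⟩

theorem IsPath.getVert_mem_of_support_subset {p : G.Walk u v} (hp : p.IsPath) {A : Set V}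
    (hA : ∀ z ∈ p.support, z ∈ insert u (insert v A)) {i : ℕ} (hi₀ : 0 < i)
    (hi : i < p.length) : p.getVert i ∈ A := by
  have hinj := hp.getVert_injOn
  rcases hA _ (p.getVert_mem_support i) with hu | hv | hA
  · have := hinj (by simp; omega) (by simp) (hu.trans p.getVert_zero.symm)
    omega
  · have := hinj (by simp; omega) (le_refl p.length) (hv.trans p.getVert_length.symm)
    omega
  · exact hA

theorem getVert_append_reverse_of_le {p q : G.Walk u v} {i : ℕ} (hi : i ≤ p.length) :
    (p.append q.reverse).getVert i = p.getVert i := by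
  rw [getVert_append', if_pos hi]

theorem getVert_append_reverse_of_ge {p q : G.Walk u v} {i : ℕ} (hi : p.length ≤ i) :
    (p.append q.reverse).getVert i = q.getVert (p.length + q.length - i) := by
  rw [getVert_append, if_neg (by omega), getVert_reverse]
  congr 1
  omega

theorem two_le_length_of_not_adj {p : G.Walk u v} (huv : u ≠ v) (hadj : ¬ G.Adj u v) :
    2 ≤ p.length := by
  by_contra! h
  interval_cases hp : p.length
  · exact huv (eq_of_length_eq_zero hp)
  · exact hadj (adj_of_length_eq_one hp)

end SimpleGraph.Walk

section

open Walk

variable {V : Type*} {G : SimpleGraph V} {S : Set V}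

theorem hasInducedCycle_of_closed_walk {u : V} (c : G.Walk u u) (hc : c.length ≠ 0)
    (hinj : Set.InjOn c.getVert {i | i < c.length})
    (hchord : ∀ ⦃i j : ℕ⦄, i + 1 < j → j < c.length → G.Adj (c.getVert i) (c.getVert j) →
      i = 0 ∧ j + 1 = c.length) :
    HasInducedCycle G c.length := by
  set n := c.length
  have : NeZero n := ⟨hc⟩
  have hn1 : n ≠ 1 := fun h => G.irrefl (adj_of_length_eq_one h)
  have val_succ (i : ZMod n) : (i + 1).val = (i.val + 1) % n := by
    rw [ZMod.val_add, ZMod.val_one'' hn1]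
  have getVert_mod {k : ℕ} (hk : k ≤ n) : c.getVert (k % n) = c.getVert k := by
    rcases hk.lt_or_eq with hk | rfl
    · rw [Nat.mod_eq_of_lt hk]
    · rw [Nat.mod_self, getVert_zero, getVert_length]
  have adj_succ (i : ZMod n) : G.Adj (c.getVert i.val) (c.getVert (i + 1).val) := by
    rw [val_succ, getVert_mod (ZMod.val_lt i)]
    exact c.adj_getVert_succ (ZMod.val_lt i)
  have of_lt (i j : ZMod n) (hij : i.val < j.val)
      (hadj : G.Adj (c.getVert i.val) (c.getVert j.val)) : j = i + 1 ∨ i = j + 1 := by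
    by_cases h : i.val + 1 = j.val
    · left
      apply ZMod.val_injective n
      rw [val_succ, h, Nat.mod_eq_of_lt (ZMod.val_lt j)]
    · obtain ⟨hi, hj⟩ := hchord (by omega) (ZMod.val_lt j) hadj
      right
      apply ZMod.val_injective n
      rw [val_succ, hj, Nat.mod_self, hi]
  refine ⟨fun i => c.getVert i.val, fun i j h => ZMod.val_injective n
    (hinj (ZMod.val_lt i) (ZMod.val_lt j) h), fun i j => ⟨fun hadj => ?_, ?_⟩⟩
  · rcases lt_trichotomy i.val j.val with h | h | h
    · exact of_lt i j h hadj
    · exact absurd hadj (by simp only [h, G.irrefl, not_false_eq_true])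
    · exact (of_lt j i h hadj.symm).symm
  · rintro (rfl | rfl)
    · exact adj_succ i
    · exact (adj_succ j).symm

theorem SimpleGraph.Walk.IsInducedPath.hasInducedCycle {u v : V} {p q : G.Walk u v}
    (hp : p.IsInducedPath) (hq : q.IsInducedPath) (huv : u ≠ v) {A B : Set V}
    (hpA : ∀ i, 0 < i → i < p.length → p.getVert i ∈ A)
    (hqB : ∀ i, 0 < i → i < q.length → q.getVert i ∈ B)
    (hAB : Disjoint A B) (hnadj : ∀ a ∈ A, ∀ b ∈ B, ¬ G.Adj a b) :
    HasInducedCycle G (p.length + q.length) := by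
  set c := p.append q.reverse
  set n := p.length + q.length
  have hlen : c.length = n := by simp [c, n]
  have hc₁ {i : ℕ} (hi : i ≤ p.length) : c.getVert i = p.getVert i :=
    getVert_append_reverse_of_le hi
  have hc₂ {i : ℕ} (hi : p.length ≤ i) : c.getVert i = q.getVert (n - i) :=
    getVert_append_reverse_of_ge hi
  have hstart : q.getVert 0 = p.getVert 0 := q.getVert_zero.trans p.getVert_zero.symm
  have hp₀ : p.length ≠ 0 := fun h => huv (eq_of_length_eq_zero h)
  have hq₀ : q.length ≠ 0 := fun h => huv (eq_of_length_eq_zero h)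
  have getVert_ne {i j : ℕ} (hij : i < j) (hj : j < n) : c.getVert i ≠ c.getVert j := by
    intro h
    by_cases hjp : j ≤ p.length
    · rw [hc₁ (by omega), hc₁ hjp] at h
      have := hp.isPath.getVert_injOn (by simp; omega) (by simp; omega) h
      omega
    by_cases hip : p.length ≤ i
    · rw [hc₂ hip, hc₂ (by omega)] at h
      have := hq.isPath.getVert_injOn (by simp; omega) (by simp; omega) h
      omega
    rw [hc₁ (by omega), hc₂ (by omega)] at h
    rcases Nat.eq_zero_or_pos i with rfl | hi
    · have := hq.isPath.getVert_injOn (by simp) (by simp; omega) (hstart.trans h)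
      omega
    · exact hAB.ne_of_mem (hpA i hi (by omega)) (hqB (n - j) (by omega) (by omega)) h
  rw [← hlen]
  refine hasInducedCycle_of_closed_walk c (by omega) (fun i hi j hj h => ?_)
    (fun i j hij hj hadj => ?_)
  · rcases lt_trichotomy i j with hij | rfl | hij
    · exact absurd h (getVert_ne hij (by simpa [hlen] using hj))
    · rfl
    · exact absurd h.symm (getVert_ne hij (by simpa [hlen] using hi))
  rw [hlen] at hj ⊢
  by_cases hjp : j ≤ p.length
  · rw [hc₁ (by omega), hc₁ hjp] at hadj
    exact absurd hadj (hp.not_adj_getVert hij hjp)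
  by_cases hip : p.length ≤ i
  · rw [hc₂ hip, hc₂ (by omega)] at hadj
    exact absurd hadj.symm (hq.not_adj_getVert (by omega) (by omega))
  rw [hc₁ (by omega), hc₂ (by omega)] at hadj
  rcases Nat.eq_zero_or_pos i with rfl | hi
  · rw [← hstart] at hadj
    exact ⟨rfl, by_contra fun hj' => hq.not_adj_getVert (by omega) (by omega) hadj⟩
  · exact absurd hadj (hnadj _ (hpA i hi (by omega)) _ (hqB (n - j) (by omega) (by omega)))

theorem hasTwoBigComponents_insert {w : V} {C C' : (G.induce S).ConnectedComponent}
    (hne : C ≠ C') (hC : C.supp.Nontrivial) (hC' : C'.supp.Nontrivial)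
    (hw : ∀ x ∈ C.supp, ¬ G.Adj w x) :
    HasTwoBigComponents G (insert w S) := by
  let ι := G.induceHomOfLE (Set.subset_insert w S)
  have map_supp_nontrivial {D : (G.induce S).ConnectedComponent} (hD : D.supp.Nontrivial) :
      (D.map ι.toHom).supp.Nontrivial := by
    obtain ⟨x, rfl, y, hy, hxy⟩ := hD
    exact ⟨ι x, rfl, ι y, congrArg (ConnectedComponent.map ι.toHom) hy, ι.injective.ne hxy⟩
  refine ⟨C.map ι.toHom, C'.map ι.toHom, fun h => ?_, map_supp_nontrivial hC,
    map_supp_nontrivial hC'⟩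
  obtain ⟨c, rfl⟩ := C.exists_rep
  obtain ⟨c', rfl⟩ := C'.exists_rep
  obtain ⟨p⟩ := ConnectedComponent.exact h
  by_cases hc' : ι c' ∈ ι '' ((G.induce S).connectedComponentMk c).supp
  · obtain ⟨x, hx, hxc'⟩ := hc'
    rw [ι.injective hxc'] at hx
    exact hne hx.symm
  -- A walk from `c` to `c'` has to leave the component of `c`, but `w` is not adjacent to it.
  obtain ⟨d, -, ⟨x, hx, hxd⟩, hd⟩ := p.exists_boundary_dart
    (ι '' ((G.induce S).connectedComponentMk c).supp) ⟨c, rfl, rfl⟩ hc'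
  have hadj : (G.induce (insert w S)).Adj (ι x) d.snd := hxd ▸ d.adj
  apply hd
  rcases d.snd.2 with hsnd | hsnd
  · exact (hw x hx (hsnd ▸ hadj.symm)).elim
  · have hadjS : (G.induce S).Adj x ⟨d.snd, hsnd⟩ := hadj
    exact ⟨⟨d.snd, hsnd⟩, (ConnectedComponent.mem_supp_congr_adj _ hadjS).mp hx, rfl⟩

theorem exists_adj_of_maximal_hasTwoBigComponents
    (hmax : ∀ S' : Set V, S ⊆ S' → HasTwoBigComponents G S' → S' = S) {w : V} (hw : w ∉ S)
    {C C' : (G.induce S).ConnectedComponent} (hne : C ≠ C')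
    (hC : C.supp.Nontrivial) (hC' : C'.supp.Nontrivial) : ∃ x ∈ C.supp, G.Adj w x := by
  by_contra! h
  have := hmax _ (Set.subset_insert w S) (hasTwoBigComponents_insert hne hC hC' h)
  exact hw (this ▸ Set.mem_insert w S)

theorem exists_isInducedPath_through_component {C : (G.induce S).ConnectedComponent}
    {u v : V} {x y : S} (hx : x ∈ C.supp) (hy : y ∈ C.supp) (hux : G.Adj u x) (hyv : G.Adj y v) :
    ∃ p : G.Walk u v, p.IsInducedPath ∧
      ∀ i, 0 < i → i < p.length → p.getVert i ∈ Subtype.val '' C.supp := by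
  obtain ⟨q⟩ := C.reachable_of_mem_supp hx hy
  obtain ⟨q', hq'⟩ : ∃ q' : G.Walk x y, ∀ z ∈ q'.support, z ∈ Subtype.val '' C.supp := by
    classical
    refine ⟨q.map (Embedding.induce S).toHom, fun _ hz => ?_⟩
    obtain ⟨z, hzq, rfl⟩ := List.mem_map.mp (q.support_map (Embedding.induce S).toHom ▸ hz)
    exact ⟨z, (ConnectedComponent.sound (q.takeUntil z hzq).reachable).symm.trans hx, rfl⟩
  set p := cons hux (q'.append (cons hyv nil))
  have hp : ∀ z ∈ p.support, z ∈ insert u (insert v (Subtype.val '' C.supp)) := by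
    intro z hz
    rw [support_cons, List.mem_cons, mem_support_append_iff, support_cons, support_nil] at hz
    rcases hz with rfl | hz | hz
    · exact Set.mem_insert _ _
    · exact Or.inr (Or.inr (hq' z hz))
    · simp only [List.mem_cons, List.not_mem_nil, or_false] at hz
      rcases hz with rfl | rfl
      · exact Or.inr (Or.inr (hq' _ q'.end_mem_support))
      · exact Or.inr (Or.inl rfl)
  obtain ⟨p', hp', hp'p⟩ := p.exists_isInducedPath_support_subset
  exact ⟨p', hp', fun i hi₀ hi =>
    hp'.isPath.getVert_mem_of_support_subset (fun z hz => hp z (hp'p hz)) hi₀ hi⟩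

end

theorem compl_isClique_general {V : Type*} (G : SimpleGraph V)
    (hchordal : IsChordalGraph G) (S : Set V) (hS : HasTwoBigComponents G S)
    (hmax : ∀ S' : Set V, S ⊆ S' → HasTwoBigComponents G S' → S' = S) :
    G.IsClique {v : V | v ∉ S} := by
  obtain ⟨C₁, C₂, hne, hC₁, hC₂⟩ := hS
  intro u hu v hv huv
  by_contra hadj
  have induced_path {C C' : (G.induce S).ConnectedComponent} (hne : C ≠ C')
      (hC : C.supp.Nontrivial) (hC' : C'.supp.Nontrivial) :
      ∃ p : G.Walk u v, p.IsInducedPath ∧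
        ∀ i, 0 < i → i < p.length → p.getVert i ∈ Subtype.val '' C.supp := by
    obtain ⟨x, hx, hux⟩ := exists_adj_of_maximal_hasTwoBigComponents hmax hu hne hC hC'
    obtain ⟨y, hy, hvy⟩ := exists_adj_of_maximal_hasTwoBigComponents hmax hv hne hC hC'
    exact exists_isInducedPath_through_component hx hy hux hvy.symm
  obtain ⟨p₁, hp₁, hp₁C⟩ := induced_path hne hC₁ hC₂
  obtain ⟨p₂, hp₂, hp₂C⟩ := induced_path hne.symm hC₂ hC₁
  have hdisj : Disjoint (Subtype.val '' C₁.supp) (Subtype.val '' C₂.supp) :=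
    (Set.disjoint_image_iff Subtype.val_injective).mpr
      ((G.induce S).pairwise_disjoint_supp_connectedComponent hne)
  have hnadj : ∀ a ∈ Subtype.val '' C₁.supp, ∀ b ∈ Subtype.val '' C₂.supp, ¬ G.Adj a b := by
    rintro _ ⟨a, ha, rfl⟩ _ ⟨b, hb, rfl⟩ hab
    exact hne (((C₁.mem_supp_congr_adj (G := G.induce S) hab).mp ha).symm.trans hb)
  have hlen₁ := Walk.two_le_length_of_not_adj (p := p₁) huv hadj
  have hlen₂ := Walk.two_le_length_of_not_adj (p := p₂) huv hadj
  exact hchordal _ (by omega) (hp₁.hasInducedCycle hp₂ huv hp₁C hp₂C hdisj hnadj)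

/-- If `S` is maximal inducing at least two big components in a chordal graph,
then the complement of `S` is a clique. -/
theorem compl_isClique {V : Type*} [Fintype V] (G : SimpleGraph V)
    (hchordal : IsChordalGraph G) (S : Set V) (hS : HasTwoBigComponents G S)
    (hmax : ∀ S' : Set V, S ⊆ S' → HasTwoBigComponents G S' → S' = S) :
    G.IsClique {v : V | v ∉ S} :=
  compl_isClique_general G hchordal S hS hmax
end

section
/- Let T be a graph with no induced P4 and no induced 2P3. If u1 and u2 are vertices of T such that u1 has two non-adjacent neighbours v,v' in T and u2 has two non-adjacent neighbours w,w' in T, and moreover T has no induced cycle of length ≥ 4, then u1 and u2 are adjacent. -/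
open SimpleGraph

/-- The graph 2P₃: disjoint union of two paths on three vertices. -/
def twoP3 : SimpleGraph (Fin 6) := graphOfList 6 [(0, 1), (1, 2), (3, 4), (4, 5)]

/-!
Suppose `u₁ ≁ u₂`. In a graph without induced `P₄` and `C₄`, a vertex `x` with non-adjacent
neighbours `w`, `w'` is adjacent to every other neighbour `u` of `w`, since otherwise `u w x w'`
is an induced `P₄` or `C₄`. Hence `u₁` is adjacent to neither `w` nor `w'`, and `u₂` to neither
`v` nor `v'`. An edge from `{v, v'}` to `{w, w'}` would then close an induced `P₄` through `u₁`
and `u₂`, so `v u₁ v'` and `w u₂ w'` span an induced `2P₃`.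
-/

section

variable {V : Type*} {G : SimpleGraph V}

/- Injectivity of the embeddings below comes from this: `pathGraph 4` has no twins, and the twins
of `cycleGraph 4` and `twoP3` are the pairs assumed distinct. -/
theorem adj_iff_of_map_eq {W : Type*} {R : W → W → Prop} {f : W → V}
    (hf : ∀ i j, G.Adj (f i) (f j) ↔ R i j) {i j : W} (h : f i = f j) (k : W) :
    R i k ↔ R j k := by
  rw [← hf, ← hf, h]

theorem hasInducedCopy_pathGraph_four {a b c d : V} (hab : G.Adj a b) (hbc : G.Adj b c)
    (hcd : G.Adj c d) (hac : ¬G.Adj a c) (had : ¬G.Adj a d) (hbd : ¬G.Adj b d) :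
    HasInducedCopy G (pathGraph 4) := by
  have hf : ∀ i j, G.Adj (![a, b, c, d] i) (![a, b, c, d] j) ↔ (pathGraph 4).Adj i j := by
    intro i j
    fin_cases i <;> fin_cases j <;>
      simp [pathGraph_adj, hab, hbc, hcd, hab.symm, hbc.symm, hcd.symm, hac, had, hbd,
        G.adj_comm c a, G.adj_comm d a, G.adj_comm d b]
  refine ⟨_, fun i j hij => ?_, hf⟩
  have htwins := adj_iff_of_map_eq hf hij
  simp only [pathGraph_adj] at htwins
  fin_cases i <;> fin_cases j <;> first | rfl | exact absurd htwins (by decide)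

theorem hasInducedCopy_cycleGraph_four {a b c d : V} (hac : a ≠ c) (hbd : b ≠ d)
    (hab : G.Adj a b) (hbc : G.Adj b c) (hcd : G.Adj c d) (hda : G.Adj d a)
    (hnac : ¬G.Adj a c) (hnbd : ¬G.Adj b d) : HasInducedCopy G (cycleGraph 4) := by
  have hf : ∀ i j, G.Adj (![a, b, c, d] i) (![a, b, c, d] j) ↔ (cycleGraph 4).Adj i j := by
    intro i j
    fin_cases i <;> fin_cases j <;>
      simp +decide [hab, hbc, hcd, hda, hab.symm, hbc.symm, hcd.symm, hda.symm, hnac, hnbd,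
        G.adj_comm c a, G.adj_comm d b]
  refine ⟨_, fun i j hij => ?_, hf⟩
  have htwins := adj_iff_of_map_eq hf hij
  fin_cases i <;> fin_cases j <;>
    first
    | rfl
    | exact absurd htwins (by decide)
    | exact absurd hij hac
    | exact absurd hij.symm hac
    | exact absurd hij hbd
    | exact absurd hij.symm hbd

theorem hasInducedCopy_twoP3 {a b c d e f : V} (hac : a ≠ c) (hdf : d ≠ f)
    (hab : G.Adj a b) (hbc : G.Adj b c) (hde : G.Adj d e) (hef : G.Adj e f)
    (hnac : ¬G.Adj a c) (hndf : ¬G.Adj d f)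
    (had : ¬G.Adj a d) (hae : ¬G.Adj a e) (haf : ¬G.Adj a f)
    (hbd : ¬G.Adj b d) (hbe : ¬G.Adj b e) (hbf : ¬G.Adj b f)
    (hcd : ¬G.Adj c d) (hce : ¬G.Adj c e) (hcf : ¬G.Adj c f) :
    HasInducedCopy G twoP3 := by
  have hf : ∀ i j, G.Adj (![a, b, c, d, e, f] i) (![a, b, c, d, e, f] j) ↔ twoP3.Adj i j := by
    intro i j
    fin_cases i <;> fin_cases j <;>
      simp [twoP3, graphOfList, hab, hbc, hde, hef, hab.symm, hbc.symm, hde.symm, hef.symm,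
        hnac, hndf, had, hae, haf, hbd, hbe, hbf, hcd, hce, hcf, G.adj_comm c a, G.adj_comm f d,
        G.adj_comm d a, G.adj_comm e a, G.adj_comm f a, G.adj_comm d b, G.adj_comm e b,
        G.adj_comm f b, G.adj_comm d c, G.adj_comm e c, G.adj_comm f c]
  refine ⟨_, fun i j hij => ?_, hf⟩
  have htwins := adj_iff_of_map_eq hf hij
  simp only [twoP3, graphOfList, fromRel_adj] at htwins
  fin_cases i <;> fin_cases j <;>
    first
    | rfl
    | exact absurd htwins (by decide)
    | exact absurd hij hac
    | exact absurd hij.symm hac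
    | exact absurd hij hdf
    | exact absurd hij.symm hdf

theorem HasInducedCopy.hasInducedCycle {n : ℕ} (h : HasInducedCopy G (cycleGraph (n + 2))) :
    HasInducedCycle G (n + 2) := by
  obtain ⟨f, hinj, hf⟩ := h
  refine ⟨f, hinj, fun i j => (hf i j).trans ?_⟩
  show i - j = 1 ∨ j - i = 1 ↔ _
  rw [sub_eq_iff_eq_add', sub_eq_iff_eq_add', or_comm]

theorem adj_of_adj_of_nonadjacent_neighbours (hP4 : ¬HasInducedCopy G (pathGraph 4))
    (hC4 : ¬HasInducedCycle G 4) ⦃u x w w' : V⦄ (hux : u ≠ x) (hxw : G.Adj x w)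
    (hxw' : G.Adj x w') (hww' : w ≠ w') (hnww' : ¬G.Adj w w') (huw : G.Adj u w) :
    G.Adj u x := by
  by_contra hnux
  by_cases huw' : G.Adj u w'
  · exact hC4 (hasInducedCopy_cycleGraph_four hux hww' huw hxw.symm hxw' huw'.symm hnux hnww'
      |>.hasInducedCycle)
  · exact hP4 (hasInducedCopy_pathGraph_four huw hxw.symm hxw' hnux huw' hnww')

end

/-- In a chordal graph with no induced P₄ and no induced 2P₃, any two distinct vertices each
having a pair of non-adjacent neighbours are adjacent. -/
theorem adj_of_nonadjacent_neighbours {V : Type*} (T : SimpleGraph V)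
    (hP4 : ¬ HasInducedCopy T (pathGraph 4)) (h2P3 : ¬ HasInducedCopy T twoP3)
    (hchordal : IsChordalGraph T)
    {u₁ u₂ v v' w w' : V} (hu : u₁ ≠ u₂) (hv : v ≠ v') (hw : w ≠ w')
    (h1 : T.Adj u₁ v) (h2 : T.Adj u₁ v') (h3 : ¬ T.Adj v v')
    (h4 : T.Adj u₂ w) (h5 : T.Adj u₂ w') (h6 : ¬ T.Adj w w') :
    T.Adj u₁ u₂ := by
  by_contra hadj
  have hadj_of_adj := adj_of_adj_of_nonadjacent_neighbours hP4 (hchordal 4 le_rfl)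
  have hu₁w : ¬T.Adj u₁ w := fun h => hadj (hadj_of_adj hu h4 h5 hw h6 h)
  have hu₁w' : ¬T.Adj u₁ w' := fun h => hadj (hadj_of_adj hu h5 h4 hw.symm (h6 ∘ .symm) h)
  have hu₂v : ¬T.Adj u₂ v := fun h => hadj (hadj_of_adj hu.symm h1 h2 hv h3 h).symm
  have hu₂v' : ¬T.Adj u₂ v' := fun h =>
    hadj (hadj_of_adj hu.symm h2 h1 hv.symm (h3 ∘ .symm) h).symm
  have hcross {x y : V} (hx : T.Adj u₁ x) (hy : T.Adj u₂ y) (hu₁y : ¬T.Adj u₁ y)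
      (hu₂x : ¬T.Adj u₂ x) : ¬T.Adj x y := fun hxy =>
    hP4 (hasInducedCopy_pathGraph_four hx hxy hy.symm hu₁y hadj (hu₂x ∘ .symm))
  exact h2P3 (hasInducedCopy_twoP3 hv hw h1.symm h2 h4.symm h5 h3 h6
    (hcross h1 h4 hu₁w hu₂v) (hu₂v ∘ .symm) (hcross h1 h5 hu₁w' hu₂v)
    hu₁w hadj hu₁w'
    (hcross h2 h4 hu₁w hu₂v') (hu₂v' ∘ .symm) (hcross h2 h5 hu₁w' hu₂v'))
end

section
/- The graph P4 + P3 (disjoint union of a path on four vertices and a path on three vertices) satisfies χ = 2 and b = 3, and every proper induced subgraph H of it satisfies b(H) = χ(H). -/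
open SimpleGraph

/-- The graph P₄ + P₃: disjoint union of a path on four vertices and a path on three vertices. -/
def graphP4P3 : SimpleGraph (Fin 7) := graphOfList 7 [(0, 1), (1, 2), (2, 3), (4, 5), (5, 6)]

/-!
P₄ + P₃ is bipartite, and the coloring `1 0 2 1 | 0 1 2` is a b-coloring with three colours whose
b-vertices are the inner vertices `1, 2, 5` of the paths; as the maximum degree is 2, b = 3.
In a b-coloring with `k` colours the `k` b-vertices are distinct and have degree at least `k - 1`,
so a bipartite graph with at most two vertices of degree ≥ 2 has b = χ. A proper induced subgraph
has at most two such vertices: if all of `1, 2, 5` kept degree two, their closed neighbourhoods,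
which cover the whole graph, would lie inside it.
-/

open Finset

section BColoring

variable {V : Type*} {G : SimpleGraph V} {k : ℕ} {c : V → Fin k}

theorem IsBColoring.exists_le_degree_add_one [G.LocallyFinite] (hc : IsBColoring G c)
    (i : Fin k) : ∃ u, c u = i ∧ k ≤ G.degree u + 1 := by
  obtain ⟨u, hu, hb⟩ := hc.2 i
  refine ⟨u, hu, ?_⟩
  have hsub : univ.erase i ⊆ (G.neighborFinset u).image c := fun j hj => by
    obtain ⟨v, huv, rfl⟩ := hb j (ne_of_mem_erase hj)
    exact mem_image_of_mem c ((G.mem_neighborFinset u v).2 huv)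
  have := (card_le_card hsub).trans card_image_le
  rw [card_erase_of_mem (mem_univ i), card_univ, Fintype.card_fin,
    card_neighborFinset_eq_degree] at this
  omega

/-- The m-degree bound: the b-vertices of the `k` colour classes are distinct. -/
theorem IsBColoring.le_card_filter_le_degree_add_one [Fintype V] [DecidableRel G.Adj]
    (hc : IsBColoring G c) : k ≤ #{u | k ≤ G.degree u + 1} := by
  choose u hu hdeg using hc.exists_le_degree_add_one
  have hinj : Function.Injective u := fun i j h => (hu i).symm.trans ((congrArg c h).trans (hu j))
  simpa using card_le_card_of_injOn (s := univ) (t := {u | k ≤ G.degree u + 1}) u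
    (fun i _ => by simp [hdeg i]) hinj.injOn

theorem IsBColoring.le_card [Finite V] (hc : IsBColoring G c) : k ≤ Nat.card V := by
  classical
  have := Fintype.ofFinite V
  rw [Nat.card_eq_fintype_card, ← card_univ]
  exact hc.le_card_filter_le_degree_add_one.trans (card_filter_le _ _)

theorem le_bChromaticNumber [Finite V] (hc : IsBColoring G c) : k ≤ bChromaticNumber G :=
  le_csSup ⟨Nat.card V, fun _ ⟨_, hc'⟩ => hc'.le_card⟩ ⟨c, hc⟩

theorem bChromaticNumber_le {n : ℕ} (h : ∀ k (c : V → Fin k), IsBColoring G c → k ≤ n) :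
    bChromaticNumber G ≤ n :=
  csSup_le' fun k ⟨c, hc⟩ => h k c hc

theorem bChromaticNumber_le_of_forall_degree_le [G.LocallyFinite] {d : ℕ}
    (h : ∀ u, G.degree u ≤ d) : bChromaticNumber G ≤ d + 1 :=
  bChromaticNumber_le fun k _ hc => by
    rcases k with _ | k
    · omega
    · obtain ⟨u, -, hu⟩ := hc.exists_le_degree_add_one 0
      have := h u
      omega

theorem bChromaticNumber_eq_zero [IsEmpty V] : bChromaticNumber G = 0 :=
  Nat.eq_zero_of_le_zero <| bChromaticNumber_le fun k _ hc => by
    rcases k with _ | k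
    · rfl
    · exact isEmptyElim (hc.2 0).choose

theorem isBColoring_bot_const [Nonempty V] :
    IsBColoring (⊥ : SimpleGraph V) (fun _ => (0 : Fin 1)) :=
  ⟨fun _ _ h => h.elim, fun _ => ⟨Classical.arbitrary V, Subsingleton.elim _ _,
    fun _ hj => (hj (Subsingleton.elim _ _)).elim⟩⟩

theorem bChromaticNumber_bot [Finite V] [Nonempty V] :
    bChromaticNumber (⊥ : SimpleGraph V) = 1 := by
  have := Fintype.ofFinite V
  exact le_antisymm (bChromaticNumber_le_of_forall_degree_le (d := 0) fun u => (bot_degree u).le)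
    (le_bChromaticNumber isBColoring_bot_const)

/-- The two ends of the edge are b-vertices of the two colour classes. -/
theorem SimpleGraph.Coloring.isBColoring_of_adj (C : G.Coloring (Fin 2)) {u v : V}
    (huv : G.Adj u v) : IsBColoring G C := by
  refine ⟨fun _ _ h => C.valid h, fun i => ?_⟩
  have hne : C u ≠ C v := C.valid huv
  by_cases hi : C u = i
  · exact ⟨u, hi, fun j hj => ⟨v, huv, by omega⟩⟩
  · exact ⟨v, by omega, fun j hj => ⟨u, huv.symm, by omega⟩⟩

theorem bChromaticNumber_eq_chromaticNumber_of_isBipartite [Fintype V] [DecidableRel G.Adj]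
    (hG : G.IsBipartite) (hdeg : #{u | 2 ≤ G.degree u} < 3) :
    (bChromaticNumber G : ℕ∞) = G.chromaticNumber := by
  rcases isEmpty_or_nonempty V with _ | _
  · simp [bChromaticNumber_eq_zero]
  by_cases hbot : G = ⊥
  · subst hbot
    simp [bChromaticNumber_bot, chromaticNumber_bot]
  obtain ⟨u, v, huv⟩ := ne_bot_iff_exists_adj.mp hbot
  have hle : bChromaticNumber G ≤ 2 := bChromaticNumber_le fun k _ hc => by
    by_contra! hk
    have hsub : ({x | k ≤ G.degree x + 1} : Finset V) ⊆ ({x | 2 ≤ G.degree x} : Finset V) :=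
      monotone_filter_right _ fun x _ hx => by omega
    have := hc.le_card_filter_le_degree_add_one.trans (card_le_card hsub)
    omega
  have hge : 2 ≤ bChromaticNumber G := le_bChromaticNumber (hG.some.isBColoring_of_adj huv)
  rw [chromaticNumber_eq_two_iff.mpr ⟨hG, hbot⟩, le_antisymm hle hge]
  rfl

end BColoring

section InducedDegree

variable {V : Type*} {G : SimpleGraph V} [Fintype V] [DecidableRel G.Adj] {s : Set V}
  [DecidablePred (· ∈ s)]

theorem neighborSet_subset_of_degree_le_degree_induce {u : s}
    (h : G.degree u ≤ (G.induce s).degree u) : G.neighborSet u ⊆ s := by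
  classical
  rw [← card_neighborFinset_eq_degree, ← card_neighborFinset_eq_degree,
    ← card_map (.subtype (· ∈ s)), map_neighborFinset_induce] at h
  have := inter_eq_left.mp (eq_of_subset_of_card_le inter_subset_left h)
  intro x hx
  simpa using this ((G.mem_neighborFinset u x).2 hx)

/-- A vertex of maximum degree `d` in `G.induce s` keeps its whole `G`-neighbourhood inside `s`. -/
theorem eq_univ_of_card_filter_degree_le_card_filter_degree_induce {d : ℕ}
    (hmax : ∀ u, G.degree u ≤ d) (hdom : ∀ x, d ≤ G.degree x ∨ ∃ u, d ≤ G.degree u ∧ G.Adj u x)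
    (hs : #{u | d ≤ G.degree u} ≤ #{u : s | d ≤ (G.induce s).degree u}) : s = Set.univ := by
  classical
  have hdeg : ∀ u : s, d ≤ (G.induce s).degree u →
      d ≤ G.degree u ∧ G.neighborSet u ⊆ s := fun u hu =>
    ⟨hu.trans ((Embedding.induce s).toCopy.degree_le u),
      neighborSet_subset_of_degree_le_degree_induce ((hmax u).trans hu)⟩
  have hmap : ({u : s | d ≤ (G.induce s).degree u} : Finset s).map (.subtype (· ∈ s)) =
      ({u | d ≤ G.degree u} : Finset V) := by
    refine eq_of_subset_of_card_le (fun x hx => ?_) (by rwa [card_map])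
    obtain ⟨u, hu, rfl⟩ := mem_map.1 hx
    exact mem_filter.2 ⟨mem_univ _, (hdeg u (mem_filter.1 hu).2).1⟩
  have hfull : ∀ u, d ≤ G.degree u → u ∈ s ∧ G.neighborSet u ⊆ s := fun u hu => by
    obtain ⟨u, hu', rfl⟩ := mem_map.1 (hmap ▸ mem_filter.2 ⟨mem_univ u, hu⟩)
    exact ⟨u.2, (hdeg u (mem_filter.1 hu').2).2⟩
  refine Set.eq_univ_of_forall fun x => ?_
  rcases hdom x with hx | ⟨u, hu, hux⟩
  · exact (hfull x hx).1
  · exact (hfull u hu).2 hux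

end InducedDegree

instance : DecidableRel graphP4P3.Adj := fun a b =>
  decidable_of_iff (a ≠ b ∧ ((a, b) ∈ [((0:Fin 7), (1:Fin 7)), (1, 2), (2, 3), (4, 5), (5, 6)] ∨
    (b, a) ∈ [((0:Fin 7), (1:Fin 7)), (1, 2), (2, 3), (4, 5), (5, 6)])) Iff.rfl

theorem graphP4P3_isBipartite : graphP4P3.IsBipartite :=
  ⟨Coloring.mk ![0, 1, 0, 1, 0, 1, 0] fun {u v} => by revert u v; decide⟩

theorem graphP4P3_ne_bot : graphP4P3 ≠ ⊥ :=
  ne_bot_iff_exists_adj.2 ⟨0, 1, by decide⟩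

theorem graphP4P3_isBColoring : IsBColoring graphP4P3 (![1, 0, 2, 1, 0, 1, 2] : Fin 7 → Fin 3) := by
  unfold IsBColoring
  decide

theorem graphP4P3_degree_le_two (u : Fin 7) : graphP4P3.degree u ≤ 2 := by
  revert u
  decide

theorem graphP4P3_card_filter_two_le_degree : #{u | 2 ≤ graphP4P3.degree u} = 3 := by
  decide

/-- The vertices of degree two are the inner vertices `1, 2, 5` of the two paths. -/
theorem graphP4P3_dominated (x : Fin 7) :
    2 ≤ graphP4P3.degree x ∨ ∃ u, 2 ≤ graphP4P3.degree u ∧ graphP4P3.Adj u x := by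
  revert x
  decide

theorem graphP4P3_card_filter_two_le_degree_induce_lt {s : Set (Fin 7)} [DecidablePred (· ∈ s)]
    (hs : s ≠ Set.univ) : #{u : s | 2 ≤ (graphP4P3.induce s).degree u} < 3 := by
  by_contra! h
  exact hs <| eq_univ_of_card_filter_degree_le_card_filter_degree_induce graphP4P3_degree_le_two
    graphP4P3_dominated (graphP4P3_card_filter_two_le_degree ▸ h)

/-- P₄ + P₃ satisfies χ = 2 and b = 3, while every proper induced subgraph `H`
satisfies b(H) = χ(H). -/
theorem P4P3_minimally_bImperfect :
    graphP4P3.chromaticNumber = 2 ∧ bChromaticNumber graphP4P3 = 3 ∧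
    ∀ s : Set (Fin 7), s ≠ Set.univ →
      (bChromaticNumber (graphP4P3.induce s) : ℕ∞) = (graphP4P3.induce s).chromaticNumber := by
  refine ⟨chromaticNumber_eq_two_iff.2 ⟨graphP4P3_isBipartite, graphP4P3_ne_bot⟩,
    le_antisymm (bChromaticNumber_le_of_forall_degree_le graphP4P3_degree_le_two)
      (le_bChromaticNumber graphP4P3_isBColoring), fun s hs => ?_⟩
  classical
  exact bChromaticNumber_eq_chromaticNumber_of_isBipartite
    (graphP4P3_isBipartite.of_hom (Embedding.induce s).toHom)
    (graphP4P3_card_filter_two_le_degree_induce_lt hs)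
end
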